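/- Assume Hypothesis (⋆). Let p be a prime, (x,y) an arc and E_x = ⟨O_p(G_{x,z}) : z ∈ Δ(x)⟩. If E_x ⊄ G_x^{[1]}, then G_y^{[2]} is a p-group. -/

import Mathlib

/-!
A semiregular `E_x` would fix `Δ(x)` pointwise, because `O_p(G_{x,z})` fixes `z`; so by (⋆)
`E_x` is transitive on `Δ(x)`. Let `h ∈ G_z^{[2]}`, `z ∈ Δ(x)`, have prime order `q ≠ p`.
Coprime action of `⟨h⟩` on the `p`-groups `O_p(G_{x,w})` lifts the action on `Δ(x)` of every
element of `E_x` to an element of `C_{G_x}(h)`; hence `C_{G_x}(h)` is transitive on `Δ(x)` and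
`h ∈ G_{z'}^{[2]}` for every `z' ∈ Δ(x)`. So the group `R` generated by the elements of prime
order `≠ p` of `G_y^{[2]}` is normalised by `G_x` and by `G_y`. The vertices `v` with
`R ≤ G_v ≤ N(R)` include the edge `{x, y}`, and local transitivity spreads this property along
the connected graph. Thus `R` fixes every vertex, `R = 1`, and by Cauchy's theorem
`G_y^{[2]}` is a `p`-group.
-/

open Equiv Subgroup

/-- `N` (a subgroup of `Perm V`) acts transitively on the neighbourhood of `x`. -/
def transOn {V : Type*} (Δ : SimpleGraph V) (N : Subgroup (Equiv.Perm V)) (x : V) : Prop :=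
  ∀ u ∈ Δ.neighborSet x, ∀ v ∈ Δ.neighborSet x, ∃ g ∈ N, g u = v

/-- The permutation group induced by `N` on the neighbourhood of `x` is semiregular. -/
def semiregOn {V : Type*} (Δ : SimpleGraph V) (N : Subgroup (Equiv.Perm V)) (x : V) : Prop :=
  ∀ g ∈ N, (∃ u ∈ Δ.neighborSet x, g u = u) → ∀ v ∈ Δ.neighborSet x, g v = v

/-- The stabiliser `G_x`. -/
def vstab {V : Type*} (G : Subgroup (Equiv.Perm V)) (x : V) : Subgroup (Equiv.Perm V) :=
  G ⊓ MulAction.stabilizer (Equiv.Perm V) x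

/-- `G_x^{[i]}`: pointwise stabiliser of the ball of radius `i` around `x`. -/
def ball {V : Type*} (Δ : SimpleGraph V) (G : Subgroup (Equiv.Perm V)) (x : V) (i : ℕ) :
    Subgroup (Equiv.Perm V) :=
  G ⊓ ⨅ z ∈ {z : V | Δ.dist x z ≤ i}, MulAction.stabilizer (Equiv.Perm V) z

/-- `K` is a normal subgroup of `H` (both subgroups of `Perm V`). -/
def normalIn {V : Type*} (K H : Subgroup (Equiv.Perm V)) : Prop :=
  K ≤ H ∧ ∀ h ∈ H, ∀ k ∈ K, h * k * h⁻¹ ∈ K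

/-- `O_p(H)`: the largest normal `p`-subgroup of `H`. -/
def Op {V : Type*} (p : ℕ) (H : Subgroup (Equiv.Perm V)) : Subgroup (Equiv.Perm V) :=
  sSup {K | normalIn K H ∧ IsPGroup p K}

/-- `E_x = ⟨O_p(G_{x,z}) : z ∈ Δ(x)⟩`. -/
def Ep {V : Type*} (Δ : SimpleGraph V) (G : Subgroup (Equiv.Perm V)) (p : ℕ) (x : V) :
    Subgroup (Equiv.Perm V) :=
  ⨆ z ∈ Δ.neighborSet x, Op p (vstab G x ⊓ vstab G z)

/-- `C_{G_x}(G_x^{[1]})`. -/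
def locCent {V : Type*} (Δ : SimpleGraph V) (G : Subgroup (Equiv.Perm V)) (x : V) :
    Subgroup (Equiv.Perm V) :=
  vstab G x ⊓ Subgroup.centralizer ((ball Δ G x 1 : Subgroup (Equiv.Perm V)) : Set (Equiv.Perm V))

/-- Hypothesis (⋆). -/
def StarHyp {V : Type*} (Δ : SimpleGraph V) (G : Subgroup (Equiv.Perm V)) : Prop :=
  ∀ x : V,
    transOn Δ (vstab G x) x ∧
    (transOn Δ (locCent Δ G x) x ∨ semiregOn Δ (locCent Δ G x) x) ∧
    ∀ p : ℕ, p.Prime → (transOn Δ (Ep Δ G p x) x ∨ semiregOn Δ (Ep Δ G p x) x)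

/-- `G` is a group of automorphisms of `Δ`. -/
def isAut {V : Type*} (Δ : SimpleGraph V) (G : Subgroup (Equiv.Perm V)) : Prop :=
  ∀ g ∈ G, ∀ u v : V, Δ.Adj (g u) (g v) ↔ Δ.Adj u v

/-- `K` is a subnormal subgroup of `H`. -/
def subnormalIn {V : Type*} (K H : Subgroup (Equiv.Perm V)) : Prop :=
  ∃ (n : ℕ) (c : ℕ → Subgroup (Equiv.Perm V)),
    c 0 = K ∧ c n = H ∧ ∀ i < n, normalIn (c i) (c (i + 1))

/-- `K` is quasisimple: perfect and simple modulo its centre. -/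
def IsQuasisimple {V : Type*} (K : Subgroup (Equiv.Perm V)) : Prop :=
  commutator ↥K = ⊤ ∧ IsSimpleGroup (↥K ⧸ Subgroup.center ↥K)

/-- `E(H)`: the layer, generated by the components of `H`. -/
def layer {V : Type*} (H : Subgroup (Equiv.Perm V)) : Subgroup (Equiv.Perm V) :=
  sSup {K | subnormalIn K H ∧ IsQuasisimple K}

/-- `F(H)`: the Fitting subgroup of `H`. -/
def fitting {V : Type*} (H : Subgroup (Equiv.Perm V)) : Subgroup (Equiv.Perm V) :=
  sSup {K | normalIn K H ∧ Group.IsNilpotent ↥K}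

/-- `F*(H) = E(H)F(H)`: the generalised Fitting subgroup of `H`. -/
def genFitting {V : Type*} (H : Subgroup (Equiv.Perm V)) : Subgroup (Equiv.Perm V) :=
  layer H ⊔ fitting H

section GroupTheory

variable {Γ : Type*} [Group Γ]

theorem conj_mem_closure {s : Set Γ} {g : Γ} (hs : ∀ k ∈ s, g * k * g⁻¹ ∈ s) {k : Γ}
    (hk : k ∈ closure s) : g * k * g⁻¹ ∈ closure s := by
  have : (closure s).map (MulAut.conj g).toMonoidHom ≤ closure s := by
    rw [MonoidHom.map_closure]
    exact closure_mono (by rintro _ ⟨k, hk, rfl⟩; exact hs k hk)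
  exact this ⟨k, hk, rfl⟩

theorem isPGroup_of_forall_prime_orderOf_eq [Finite Γ] {p : ℕ} [Fact p.Prime]
    (h : ∀ g : Γ, (orderOf g).Prime → orderOf g = p) : IsPGroup p Γ := by
  refine IsPGroup.of_card <|
    Nat.eq_prime_pow_of_unique_prime_dvd Nat.card_pos.ne' fun {q} hq hdvd => ?_
  have : Fact q.Prime := ⟨hq⟩
  obtain ⟨g, hg⟩ := exists_prime_orderOf_dvd_card' q hdvd
  exact hg ▸ h g (hg ▸ hq)

theorem exists_mem_centralizer_inv_mul_mem [Finite Γ] {p q : ℕ} [Fact p.Prime] [Fact q.Prime]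
    (hqp : q ≠ p) {Q K H : Subgroup Γ} (hQ : IsPGroup p Q) (hH : IsPGroup q H)
    (hHQ : H ≤ normalizer (Q : Set Γ)) (hHK : H ≤ K) {a : Γ} (haQ : a ∈ Q)
    (haK : a ∈ normalizer (K : Set Γ)) :
    ∃ b ∈ Q, b ∈ centralizer H ∧ a⁻¹ * b ∈ K := by
  -- `H` acts by conjugation on the coset `a (Q ⊓ K)`, whose size is a power of `p`.
  let _ : MulAction H Γ := MulAction.compHom Γ (MulAut.conj.comp H.subtype)
  have smul_def (c : H) (b : Γ) : c • b = c * b * (c : Γ)⁻¹ := rfl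
  let coset : SubMulAction H Γ :=
    { carrier := (a⁻¹ * ·) ⁻¹' (Q ⊓ K : Subgroup Γ)
      smul_mem' := by
        rintro ⟨c, hc⟩ b hb
        obtain ⟨hbQ, hbK⟩ := mem_inf.mp hb
        have hcaK : a⁻¹ * c * a ∈ K := (mem_normalizer_iff''.mp haK c).mp (hHK hc)
        have hbQ' : b ∈ Q := by simpa using mul_mem haQ hbQ
        have hcbQ : c * b * c⁻¹ ∈ Q := (mem_normalizer_iff.mp (hHQ hc) b).mp hbQ'
        refine mem_inf.mpr ⟨mul_mem (inv_mem haQ) hcbQ, ?_⟩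
        convert mul_mem (mul_mem hcaK hbK) (inv_mem (hHK hc)) using 1
        rw [smul_def]
        group }
  have hcard : Nat.card coset = Nat.card (Q ⊓ K : Subgroup Γ) :=
    Nat.card_preimage_of_injective (s := ((Q ⊓ K : Subgroup Γ) : Set Γ))
      (mul_right_injective a⁻¹) (fun b _ => ⟨a * b, by simp⟩)
  obtain ⟨n, hn⟩ := IsPGroup.iff_card.mp (hQ.to_le (inf_le_left : Q ⊓ K ≤ Q))
  have hndvd : ¬ q ∣ Nat.card coset := by
    rw [hcard, hn]
    exact fun hdvd => hqp ((Nat.prime_dvd_prime_iff_eq Fact.out Fact.out).mp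
      ((Fact.out : q.Prime).dvd_of_dvd_pow hdvd))
  obtain ⟨⟨b, hb⟩, hfix⟩ := hH.nonempty_fixed_point_of_prime_not_dvd_card coset hndvd
  obtain ⟨hbQ, hbK⟩ := mem_inf.mp hb
  refine ⟨b, by simpa using mul_mem haQ hbQ, mem_centralizer_iff.mpr fun c hc => ?_, hbK⟩
  have hcb : c * b * c⁻¹ = b := congrArg Subtype.val (hfix ⟨c, hc⟩)
  exact mul_inv_eq_iff_eq_mul.mp hcb

end GroupTheory

theorem SimpleGraph.Connected.forall_mem_of_adj_closed {V : Type*} {Δ : SimpleGraph V}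
    (hconn : Δ.Connected) {S : Set V} {x y : V} (hxy : Δ.Adj x y) (hx : x ∈ S) (hy : y ∈ S)
    (hS : ∀ ⦃z u v⦄, z ∈ S → u ∈ S → Δ.Adj z u → Δ.Adj z v → v ∈ S) (v : V) : v ∈ S := by
  suffices ∀ {a b : V}, Δ.Adj b a → a ∈ S → b ∈ S → ∀ w : Δ.Walk a v, v ∈ S from
    this hxy hy hx (hconn.preconnected y v).some
  intro a b hba ha hb w
  induction w generalizing b with
  | nil => exact ha
  | cons hac _ ih => exact ih hac (hS ha hb hba.symm hac) ha

section Automorphisms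

variable {V : Type*} {Δ : SimpleGraph V} {G : Subgroup (Perm V)}

theorem mem_vstab_iff {g : Perm V} {x : V} : g ∈ vstab G x ↔ g ∈ G ∧ g x = x := by
  simp [vstab, MulAction.mem_stabilizer_iff, Perm.smul_def]

theorem mem_ball_iff {g : Perm V} {x : V} {i : ℕ} :
    g ∈ ball Δ G x i ↔ g ∈ G ∧ ∀ z, Δ.dist x z ≤ i → g z = z := by
  simp [ball, mem_iInf, MulAction.mem_stabilizer_iff, Perm.smul_def]

theorem ball_le_vstab {x z : V} {i : ℕ} (h : Δ.dist x z ≤ i) : ball Δ G x i ≤ vstab G z :=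
  fun _ hg => mem_vstab_iff.mpr ⟨(mem_ball_iff.mp hg).1, (mem_ball_iff.mp hg).2 z h⟩

theorem ball_le_ball (hconn : Δ.Connected) {x z : V} {i j : ℕ} (h : Δ.dist z x ≤ j) :
    ball Δ G x (i + j) ≤ ball Δ G z i := by
  intro g hg
  refine mem_ball_iff.mpr ⟨(mem_ball_iff.mp hg).1, fun w hw => (mem_ball_iff.mp hg).2 w ?_⟩
  have := hconn.dist_triangle (u := x) (v := z) (w := w)
  rw [SimpleGraph.dist_comm] at h
  omega

theorem mem_ball_one_iff_of_connected (hconn : Δ.Connected) {g : Perm V} {x : V} :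
    g ∈ ball Δ G x 1 ↔ g ∈ vstab G x ∧ ∀ z, Δ.Adj x z → g z = z := by
  have hdist : ∀ z, Δ.dist x z ≤ 1 ↔ z = x ∨ Δ.Adj x z := fun z => by
    rw [Nat.le_one_iff_eq_zero_or_eq_one, hconn.dist_eq_zero_iff,
      SimpleGraph.dist_eq_one_iff_adj, eq_comm]
  simp only [mem_ball_iff, mem_vstab_iff, hdist]
  grind

theorem dist_apply_of_isAut (hconn : Δ.Connected) (hG : isAut Δ G) {g : Perm V} (hg : g ∈ G)
    (u v : V) : Δ.dist (g u) (g v) = Δ.dist u v := by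
  have dist_apply_le : ∀ g ∈ G, ∀ u v, Δ.dist (g u) (g v) ≤ Δ.dist u v := by
    intro g hg u v
    obtain ⟨w, hw⟩ := hconn.exists_walk_length_eq_dist u v
    let φ : Δ →g Δ := ⟨g, (hG g hg _ _).mpr⟩
    calc Δ.dist (g u) (g v) ≤ (w.map φ).length := SimpleGraph.dist_le _
      _ = Δ.dist u v := by simp [hw]
  refine le_antisymm (dist_apply_le g hg u v) ?_
  simpa using dist_apply_le g⁻¹ (inv_mem hg) (g u) (g v)

theorem conj_mem_vstab {g k : Perm V} {u : V} (hg : g ∈ G) (hk : k ∈ vstab G u) :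
    g * k * g⁻¹ ∈ vstab G (g u) := by
  obtain ⟨hkG, hku⟩ := mem_vstab_iff.mp hk
  exact mem_vstab_iff.mpr ⟨mul_mem (mul_mem hg hkG) (inv_mem hg), by simp [hku]⟩

theorem conj_mem_ball (hconn : Δ.Connected) (hG : isAut Δ G) {g k : Perm V} {u : V} {i : ℕ}
    (hg : g ∈ G) (hk : k ∈ ball Δ G u i) : g * k * g⁻¹ ∈ ball Δ G (g u) i := by
  obtain ⟨hkG, hkfix⟩ := mem_ball_iff.mp hk
  refine mem_ball_iff.mpr ⟨mul_mem (mul_mem hg hkG) (inv_mem hg), fun z hz => ?_⟩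
  have hz' : Δ.dist u (g⁻¹ z) ≤ i :=
    (dist_apply_of_isAut hconn hG hg u (g⁻¹ z)).symm.trans_le (by simpa using hz)
  simpa using congrArg g (hkfix _ hz')

theorem vstab_le_normalizer_ball (hconn : Δ.Connected) (hG : isAut Δ G) (x : V) (i : ℕ) :
    vstab G x ≤ normalizer (ball Δ G x i : Set (Perm V)) := by
  have conj_mem : ∀ g ∈ vstab G x, ∀ k ∈ ball Δ G x i, g * k * g⁻¹ ∈ ball Δ G x i := by
    intro g hg k hk
    obtain ⟨hgG, hgx⟩ := mem_vstab_iff.mp hg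
    simpa only [hgx] using conj_mem_ball hconn hG hgG hk
  refine fun g hg => mem_normalizer_iff.mpr fun k => ⟨conj_mem g hg k, fun hk => ?_⟩
  simpa [mul_assoc] using conj_mem g⁻¹ (inv_mem hg) _ hk

end Automorphisms

section LocalAction

variable {V : Type*} {Δ : SimpleGraph V} {G : Subgroup (Perm V)}

theorem le_normalizer_of_normalIn {K H : Subgroup (Perm V)} (h : normalIn K H) :
    H ≤ normalizer (K : Set (Perm V)) := by
  refine fun g hg => mem_normalizer_iff.mpr fun k => ⟨h.2 g hg k, fun hk => ?_⟩
  simpa [mul_assoc] using h.2 g⁻¹ (inv_mem hg) _ hk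

theorem Op_le (p : ℕ) (H : Subgroup (Perm V)) : Op p H ≤ H :=
  sSup_le fun _ hK => hK.1.1

theorem le_normalizer_Op (p : ℕ) (H : Subgroup (Perm V)) :
    H ≤ normalizer (Op p H : Set (Perm V)) := by
  rw [Op, sSup_eq_iSup']
  exact (le_iInf fun K => le_normalizer_of_normalIn K.2.1).trans
    (iInf_normalizer_le_normalizer_iSup _)

theorem Ep_le_ball_one_of_semiregOn (hconn : Δ.Connected) {p : ℕ} {x : V}
    (hs : semiregOn Δ (Ep Δ G p x) x) : Ep Δ G p x ≤ ball Δ G x 1 := by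
  refine iSup₂_le fun w hw a ha => ?_
  have haE : a ∈ Ep Δ G p x :=
    le_iSup₂ (f := fun z (_ : z ∈ Δ.neighborSet x) => Op p (vstab G x ⊓ vstab G z)) w hw ha
  obtain ⟨hax, haw⟩ := mem_inf.mp (Op_le _ _ ha)
  exact (mem_ball_one_iff_of_connected hconn).mpr
    ⟨hax, fun z hz => hs a haE ⟨w, hw, (mem_vstab_iff.mp haw).2⟩ z hz⟩

variable [Finite V]

theorem isPGroup_Op (p : ℕ) (H : Subgroup (Perm V)) : IsPGroup p (Op p H) := by
  suffices ∀ T : Set (Subgroup (Perm V)), T.Finite → T ⊆ {K | normalIn K H ∧ IsPGroup p K} →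
      IsPGroup p (sSup T : Subgroup (Perm V)) from this _ (Set.toFinite _) subset_rfl
  intro T hT
  induction T, hT using Set.Finite.induction_on with
  | empty => exact fun _ => sSup_empty (α := Subgroup (Perm V)) ▸ IsPGroup.of_bot
  | @insert K T _ _ ih =>
    intro hsub
    have hK := hsub (Set.mem_insert K T)
    rw [sSup_insert]
    refine hK.2.to_sup_of_normal_left' (ih ((Set.subset_insert K T).trans hsub)) ?_
    exact sSup_le fun K' hK' =>
      (hsub (Set.mem_insert_of_mem K hK')).1.1.trans (le_normalizer_of_normalIn hK.1)

theorem Ep_le_centralizer_sup_ball (hconn : Δ.Connected) (hG : isAut Δ G) {p : ℕ}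
    [Fact p.Prime] {x z₀ : V} (hz₀ : Δ.Adj x z₀) {h : Perm V} (hh : h ∈ ball Δ G z₀ 2)
    (hq : (orderOf h).Prime) (hqp : orderOf h ≠ p) :
    Ep Δ G p x ≤ (vstab G x ⊓ centralizer (zpowers h)) ⊔ ball Δ G x 1 := by
  have : Fact (orderOf h).Prime := ⟨hq⟩
  have hhx : h ∈ ball Δ G x 1 :=
    ball_le_ball hconn (i := 1) (j := 1) (SimpleGraph.dist_eq_one_iff_adj.mpr hz₀).le hh
  refine iSup₂_le fun w hw a ha => ?_
  have hhQ : h ∈ normalizer (Op p (vstab G x ⊓ vstab G w) : Set (Perm V)) :=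
    le_normalizer_Op _ _ (mem_inf.mpr ⟨ball_le_vstab (by simp) hhx,
      ball_le_vstab (SimpleGraph.dist_eq_one_iff_adj.mpr hw).le hhx⟩)
  have haK : a ∈ normalizer (ball Δ G x 1 : Set (Perm V)) :=
    vstab_le_normalizer_ball hconn hG x 1 (mem_inf.mp (Op_le _ _ ha)).1
  obtain ⟨b, hbQ, hbh, hab⟩ := exists_mem_centralizer_inv_mul_mem hqp (isPGroup_Op p _)
    (IsPGroup.of_card (by rw [Nat.card_zpowers, pow_one])) (zpowers_le.mpr hhQ)
    (zpowers_le.mpr hhx) ha haK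
  have hbx : b ∈ vstab G x := (mem_inf.mp (Op_le _ _ hbQ)).1
  have hab' : a = b * (a⁻¹ * b)⁻¹ := by group
  rw [hab']
  exact mul_mem (mem_sup_left (mem_inf.mpr ⟨hbx, hbh⟩)) (mem_sup_right (inv_mem hab))

theorem mem_ball_two_of_transOn_Ep (hconn : Δ.Connected) (hG : isAut Δ G) {p : ℕ}
    [Fact p.Prime] {x z₀ z : V} (htrans : transOn Δ (Ep Δ G p x) x) (hz₀ : Δ.Adj x z₀)
    (hz : Δ.Adj x z) {h : Perm V} (hh : h ∈ ball Δ G z₀ 2) (hq : (orderOf h).Prime)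
    (hqp : orderOf h ≠ p) : h ∈ ball Δ G z 2 := by
  obtain ⟨g, hgE, hgz⟩ := htrans z₀ hz₀ z hz
  have hle : vstab G x ⊓ centralizer (zpowers h) ≤ normalizer (ball Δ G x 1 : Set (Perm V)) :=
    inf_le_left.trans (vstab_le_normalizer_ball hconn hG x 1)
  have hg := Ep_le_centralizer_sup_ball hconn hG hz₀ hh hq hqp hgE
  rw [← SetLike.mem_coe, coe_mul_of_left_le_normalizer_right _ _ hle] at hg
  obtain ⟨c, hc, k, hk, rfl⟩ := hg
  obtain ⟨hcx, hch⟩ := mem_inf.mp hc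
  have hcz : c z₀ = z := by
    rw [← hgz, Perm.mul_apply, ((mem_ball_one_iff_of_connected hconn).mp hk).2 z₀ hz₀]
  have hconj : c * h * c⁻¹ = h := by
    rw [← mem_centralizer_iff.mp hch h (mem_zpowers h), mul_inv_cancel_right]
  simpa only [hconj, hcz] using conj_mem_ball hconn hG (mem_vstab_iff.mp hcx).1 hh

end LocalAction

section Propagation

variable {V : Type*} {Δ : SimpleGraph V} {G : Subgroup (Perm V)}

theorem le_vstab_and_vstab_le_normalizer_of_adj {R : Subgroup (Perm V)} {z u v : V}
    (htrans : transOn Δ (vstab G z) z) (hz : vstab G z ≤ normalizer (R : Set (Perm V)))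
    (hu : R ≤ vstab G u ∧ vstab G u ≤ normalizer (R : Set (Perm V)))
    (hzu : Δ.Adj z u) (hzv : Δ.Adj z v) :
    R ≤ vstab G v ∧ vstab G v ≤ normalizer (R : Set (Perm V)) := by
  obtain ⟨g, hg, rfl⟩ := htrans u hzu v hzv
  have hgN := hz hg
  have hgG := (mem_vstab_iff.mp hg).1
  constructor
  · intro k hk
    have hk' : g⁻¹ * k * g⁻¹⁻¹ ∈ R := (mem_normalizer_iff.mp (inv_mem hgN) k).mp hk
    simpa [mul_assoc] using conj_mem_vstab hgG (hu.1 hk')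
  · intro s hs
    have hs' : g⁻¹ * s * g⁻¹⁻¹ ∈ vstab G u := by
      simpa using conj_mem_vstab (inv_mem hgG) hs
    simpa [mul_assoc] using mul_mem (mul_mem hgN (hu.2 hs')) (inv_mem hgN)

variable [Finite V]

theorem closure_primeOrder_ball_two_eq_bot (hconn : Δ.Connected) (hG : isAut Δ G)
    (hloc : ∀ v, transOn Δ (vstab G v) v) {p : ℕ} [Fact p.Prime] {x y : V} (hxy : Δ.Adj x y)
    (htrans : transOn Δ (Ep Δ G p x) x) :
    closure {h | h ∈ ball Δ G y 2 ∧ (orderOf h).Prime ∧ orderOf h ≠ p} = ⊥ := by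
  set s := {h | h ∈ ball Δ G y 2 ∧ (orderOf h).Prime ∧ orderOf h ≠ p}
  have conj_mem : ∀ g ∈ G, Δ.Adj x (g y) → ∀ k ∈ s, g * k * g⁻¹ ∈ s := by
    rintro g hg hgy k ⟨hk, hq, hqp⟩
    have horder : orderOf (g * k * g⁻¹) = orderOf k :=
      (SemiconjBy.orderOf_eq g (by simp [SemiconjBy])).symm
    rw [← horder] at hq hqp
    exact ⟨mem_ball_two_of_transOn_Ep hconn hG htrans hgy hxy (conj_mem_ball hconn hG hg hk)
      hq hqp, hq, hqp⟩
  have mem_normalizer : ∀ g ∈ G, Δ.Adj x (g y) → g ∈ normalizer (closure s : Set (Perm V)) :=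
    fun g hg hgy => mem_normalizer_fintype fun _ hk => conj_mem_closure (conj_mem g hg hgy) hk
  have hR : closure s ≤ ball Δ G y 2 := closure_le _ |>.mpr fun _ hk => hk.1
  let S : Set V :=
    {v | closure s ≤ vstab G v ∧ vstab G v ≤ normalizer (closure s : Set (Perm V))}
  have hx : x ∈ S := by
    refine ⟨hR.trans (ball_le_vstab ((SimpleGraph.dist_eq_one_iff_adj.mpr hxy.symm).le.trans
      one_le_two)), fun g hg => ?_⟩
    obtain ⟨hgG, hgx⟩ := mem_vstab_iff.mp hg
    exact mem_normalizer g hgG (by simpa [hgx] using (hG g hgG x y).mpr hxy)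
  have hy : y ∈ S := by
    refine ⟨hR.trans (ball_le_vstab (by simp)), fun g hg => ?_⟩
    obtain ⟨hgG, hgy⟩ := mem_vstab_iff.mp hg
    exact mem_normalizer g hgG (by rwa [hgy])
  have hS : ∀ v, v ∈ S := hconn.forall_mem_of_adj_closed hxy hx hy
    fun _ _ _ hz hu hzu hzv =>
      le_vstab_and_vstab_le_normalizer_of_adj (hloc _) hz.2 hu hzu hzv
  refine eq_bot_iff.mpr fun k hk => mem_bot.mpr (Equiv.ext fun v => ?_)
  exact (mem_vstab_iff.mp ((hS v).1 hk)).2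

end Propagation

theorem stmt9 {V : Type*} [Fintype V] (Δ : SimpleGraph V) (G : Subgroup (Equiv.Perm V))
    (hconn : Δ.Connected) (hG : isAut Δ G) (hstar : StarHyp Δ G)
    (p : ℕ) (hp : p.Prime) {x y : V} (hxy : Δ.Adj x y)
    (hEx : ¬ Ep Δ G p x ≤ ball Δ G x 1) :
    IsPGroup p (ball Δ G y 2) := by
  have : Fact p.Prime := ⟨hp⟩
  have htrans : transOn Δ (Ep Δ G p x) x := ((hstar x).2.2 p hp).resolve_right
    fun hs => hEx (Ep_le_ball_one_of_semiregOn hconn hs)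
  have hR := closure_primeOrder_ball_two_eq_bot hconn hG (fun v => (hstar v).1) hxy htrans
  refine isPGroup_of_forall_prime_orderOf_eq fun g hq => ?_
  rw [← orderOf_coe] at hq ⊢
  by_contra hqp
  have hg1 : (g : Perm V) = 1 := by
    rw [← mem_bot, ← hR]
    exact subset_closure ⟨g.2, hq, hqp⟩
  exact Nat.not_prime_one (by simpa [hg1] using hq)
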